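/- Likelihood dominance of the latent-fair-decision family: let S, D be Boolean and X range over a finite nonempty type, and let (s_1,x_1,d_1), …, (s_N,x_N,d_N) be a finite dataset of samples in S×X×D. Then the supremum, over all pmfs q on S×X×D×Df (Df Boolean) satisfying the fair-model independencies, of the likelihood Π_{i=1}^N r_q(s_i,x_i,d_i) of the dataset under the marginal r_q of q over (S,X,D), is at least the supremum, over all pmfs p on S×X×D under which D is independent of S, of the likelihood Π_{i=1}^N p(s_i,x_i,d_i). That is, on any dataset the latent-variable fair model achieves marginal likelihood at least as high as any fair model without a latent decision variable. -/

import Mathlib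

/-- A probability mass function on a finite type: nonnegative and sums to one. -/
def IsPMF {α : Type*} [Fintype α] (p : α → ℝ) : Prop :=
  (∀ a, 0 ≤ p a) ∧ ∑ a, p a = 1

/-- `q` over `S × X × D × Df` satisfies the fair-model independencies:
`q(s,x,d,df) = q_S(s) · q_F(df) · a(x|s,df) · b(d|s,df)` where `q_S`, `q_F` are the
marginals of `q` over `S` and `Df`, and `a(·|s,df)`, `b(·|s,df)` are families of
conditional pmfs over `X` and `D`. -/
def FairIndep {X : Type*} [Fintype X] (q : Bool × X × Bool × Bool → ℝ) : Prop :=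
  ∃ (a : Bool → Bool → X → ℝ) (b : Bool → Bool → Bool → ℝ),
    (∀ s df x, 0 ≤ a s df x) ∧ (∀ s df, ∑ x, a s df x = 1) ∧
    (∀ s df d, 0 ≤ b s df d) ∧ (∀ s df, ∑ d, b s df d = 1) ∧
    (∀ s x d df, q (s, x, d, df) =
      (∑ x', ∑ d', ∑ df', q (s, x', d', df')) *
      (∑ s', ∑ x', ∑ d', q (s', x', d', df)) * a s df x * b s df d)

/-!
Every fair model `p` of `(S, X, D)` is the `(S, X, D)`-marginal of the latent model in which
`Df` is a copy of `D`. In that model `Df ⊥ S` is the hypothesis `D ⊥ S`, and `D`, being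
determined by `Df`, is conditionally independent of everything given `(S, Df)`; the conditional
of `X` given `(S, Df) = (s, d)` is `p(s, ·, d) / (p(s) p(d))`, whose normalising constant
`∑ₓ p(s, x, d)` equals `p(s) p(d)` again by `D ⊥ S`. So every likelihood of the smaller family
is one of the larger family, and all these likelihoods lie in `[0, 1]`.
-/

lemma Real.sSup_le_sSup_of_subset_of_nonneg {A B : Set ℝ} (hB : BddAbove B)
    (hB₀ : ∀ x ∈ B, 0 ≤ x) (hAB : A ⊆ B) : sSup A ≤ sSup B := by
  rcases A.eq_empty_or_nonempty with rfl | hA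
  · simpa using Real.sSup_nonneg hB₀
  · exact csSup_le_csSup hB hA hAB

namespace IsPMF

variable {α : Type*} [Fintype α] {p : α → ℝ}

lemma nonempty (hp : IsPMF p) : Nonempty α := by
  by_contra h
  rw [not_nonempty_iff] at h
  simpa using hp.2

lemma le_one (hp : IsPMF p) (a : α) : p a ≤ 1 :=
  hp.2 ▸ Finset.single_le_sum (fun b _ => hp.1 b) (Finset.mem_univ a)

lemma prod_nonneg (hp : IsPMF p) {ι : Type*} (s : Finset ι) (f : ι → α) :
    0 ≤ ∏ i ∈ s, p (f i) :=
  Finset.prod_nonneg fun i _ => hp.1 (f i)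

lemma prod_le_one (hp : IsPMF p) {ι : Type*} (s : Finset ι) (f : ι → α) :
    ∏ i ∈ s, p (f i) ≤ 1 :=
  Finset.prod_le_one (fun i _ => hp.1 (f i)) fun i _ => hp.le_one (f i)

end IsPMF

lemma isPMF_uniform (α : Type*) [Fintype α] [Nonempty α] :
    IsPMF fun _ : α => (Fintype.card α : ℝ)⁻¹ :=
  ⟨fun _ => by positivity, by simp⟩

section Normalize

variable {α : Type*} [Fintype α]

noncomputable def normalizeOr (w fallback : α → ℝ) : α → ℝ :=
  if ∑ a, w a = 0 then fallback else fun a => w a / ∑ b, w b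

lemma isPMF_normalizeOr {w fallback : α → ℝ} (hw : ∀ a, 0 ≤ w a) (hf : IsPMF fallback) :
    IsPMF (normalizeOr w fallback) := by
  unfold normalizeOr
  split_ifs with h
  · exact hf
  · exact ⟨fun a => div_nonneg (hw a) (Finset.sum_nonneg fun b _ => hw b),
      by rw [← Finset.sum_div, div_self h]⟩

lemma sum_mul_normalizeOr {w : α → ℝ} (hw : ∀ a, 0 ≤ w a) (fallback : α → ℝ) (a : α) :
    (∑ b, w b) * normalizeOr w fallback a = w a := by
  unfold normalizeOr
  split_ifs with h
  · rw [h, zero_mul, ((Finset.sum_eq_zero_iff_of_nonneg fun b _ => hw b).1 h a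
      (Finset.mem_univ a))]
  · exact mul_div_cancel₀ _ h

end Normalize

section Lift

variable {α β γ : Type*}

def marginalLast [Fintype γ] (q : α × β × γ × γ → ℝ) : α × β × γ → ℝ :=
  fun t => ∑ c, q (t.1, t.2.1, t.2.2, c)

lemma IsPMF.marginalLast [Fintype α] [Fintype β] [Fintype γ] {q : α × β × γ × γ → ℝ}
    (hq : IsPMF q) : IsPMF (marginalLast q) :=
  ⟨fun _ => Finset.sum_nonneg fun _ _ => hq.1 _, by
    simpa only [_root_.marginalLast, Fintype.sum_prod_type] using hq.2⟩

/-- The law of `(a, b, c, c)` for `(a, b, c)` distributed according to `p`. -/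
def liftDiag [DecidableEq γ] (p : α × β × γ → ℝ) : α × β × γ × γ → ℝ :=
  fun t => if t.2.2.2 = t.2.2.1 then p (t.1, t.2.1, t.2.2.1) else 0

variable [Fintype γ] [DecidableEq γ] (p : α × β × γ → ℝ)

@[simp]
lemma sum_liftDiag_last (a : α) (b : β) (c : γ) : ∑ c', liftDiag p (a, b, c, c') =
    p (a, b, c) := by
  simp [liftDiag]

@[simp]
lemma sum_liftDiag_third (a : α) (b : β) (c : γ) : ∑ c', liftDiag p (a, b, c', c) =
    p (a, b, c) := by
  simp [liftDiag]

lemma marginalLast_liftDiag : marginalLast (liftDiag p) = p := by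
  ext t
  simp [marginalLast]

variable [Fintype α] [Fintype β]

lemma IsPMF.liftDiag {p : α × β × γ → ℝ} (hp : IsPMF p) : IsPMF (liftDiag p) := by
  refine ⟨fun t => ?_, ?_⟩
  · unfold _root_.liftDiag
    split_ifs
    exacts [hp.1 _, le_rfl]
  · simpa only [Fintype.sum_prod_type, sum_liftDiag_last] using hp.2

end Lift

theorem fairIndep_liftDiag {X : Type*} [Fintype X] {p : Bool × X × Bool → ℝ} (hp : IsPMF p)
    (hind : ∀ s d : Bool, (∑ x, p (s, x, d)) =
      (∑ x, ∑ d', p (s, x, d')) * (∑ s', ∑ x, p (s', x, d))) :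
    FairIndep (liftDiag p) := by
  have : Nonempty X := hp.nonempty.map (·.2.1)
  have ha (s df : Bool) := isPMF_normalizeOr (fun x => hp.1 (s, x, df)) (isPMF_uniform X)
  -- The uniform fallback is only used where `p(s) p(d) = 0`, hence `p(s, ·, d) = 0`.
  refine ⟨fun s df => normalizeOr (fun x => p (s, x, df)) fun _ => (Fintype.card X : ℝ)⁻¹,
    fun _ df d => if d = df then 1 else 0, fun s df => (ha s df).1, fun s df => (ha s df).2,
    fun _ _ _ => by positivity, by simp, fun s x d df => ?_⟩
  simp only [sum_liftDiag_last, sum_liftDiag_third, ← hind]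
  by_cases h : d = df
  · subst h
    simp [liftDiag, sum_mul_normalizeOr fun x => hp.1 (s, x, d)]
  · simp [liftDiag, h, Ne.symm h]

theorem latent_fair_family_likelihood_dominance_general
    {X : Type*} [Fintype X]
    (N : ℕ) (data : Fin N → Bool × X × Bool) :
    sSup {L : ℝ | ∃ p : Bool × X × Bool → ℝ,
        IsPMF p ∧
        (∀ s d : Bool, (∑ x, p (s, x, d)) =
          (∑ x, ∑ d', p (s, x, d')) * (∑ s', ∑ x, p (s', x, d))) ∧
        L = ∏ i, p (data i)} ≤
      sSup {L : ℝ | ∃ q : Bool × X × Bool × Bool → ℝ,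
        IsPMF q ∧ FairIndep q ∧
        L = ∏ i, ∑ df, q ((data i).1, (data i).2.1, (data i).2.2, df)} := by
  refine Real.sSup_le_sSup_of_subset_of_nonneg ⟨1, ?_⟩ ?_ ?_
  · rintro _ ⟨q, hq, -, rfl⟩
    exact hq.marginalLast.prod_le_one _ data
  · rintro _ ⟨q, hq, -, rfl⟩
    exact hq.marginalLast.prod_nonneg _ data
  · rintro _ ⟨p, hp, hind, rfl⟩
    exact ⟨liftDiag p, hp.liftDiag, fairIndep_liftDiag hp hind,
      (congrArg (fun r => ∏ i, r (data i)) (marginalLast_liftDiag p)).symm⟩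

/-- Likelihood dominance of the latent-fair-decision family: on any finite dataset over
`(S, X, D)`, the supremum of the dataset likelihood under `(S,X,D)`-marginals of pmfs `q`
over `(S, X, D, Df)` satisfying the fair-model independencies is at least the supremum of
the dataset likelihood under pmfs `p` over `(S, X, D)` in which `D` is independent of `S`. -/
theorem latent_fair_family_likelihood_dominance
    {X : Type*} [Fintype X] [Nonempty X]
    (N : ℕ) (data : Fin N → Bool × X × Bool) :
    sSup {L : ℝ | ∃ p : Bool × X × Bool → ℝ,
        IsPMF p ∧
        (∀ s d : Bool, (∑ x, p (s, x, d)) =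
          (∑ x, ∑ d', p (s, x, d')) * (∑ s', ∑ x, p (s', x, d))) ∧
        L = ∏ i, p (data i)} ≤
      sSup {L : ℝ | ∃ q : Bool × X × Bool × Bool → ℝ,
        IsPMF q ∧ FairIndep q ∧
        L = ∏ i, ∑ df, q ((data i).1, (data i).2.1, (data i).2.2, df)} :=
  latent_fair_family_likelihood_dominance_general N data
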